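/- arXiv:2307.00401 — 2 statements merged into one kernel-verified Lean document; each statement's English description precedes it below -/
import Mathlib

section
/- Let X be a Helly graph. A subset σ ⊆ X is a round clique if and only if σ is a singleton {x} for some vertex x, or σ is a nonempty intersection of a family of maximal cliques of X. -/
namespace HellyPaper

variable {V : Type*}

/-- The combinatorial ball of radius `r` around `x` in the graph `G`. -/
def ball (G : SimpleGraph V) (x : V) (r : ℕ) : Set V := {y | G.dist x y ≤ r}

/-- A Helly graph: a connected graph in which every family of pairwise
intersecting combinatorial balls has nonempty global intersection. -/
def IsHellyGraph (G : SimpleGraph V) : Prop :=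
  G.Connected ∧ ∀ S : Set (V × ℕ),
    (∀ p ∈ S, ∀ q ∈ S, (ball G p.1 p.2 ∩ ball G q.1 q.2).Nonempty) →
    (⋂ p ∈ S, ball G p.1 p.2).Nonempty

/-- A round clique: a nonempty clique which is an intersection of a family of
combinatorial balls. -/
def IsRoundClique (G : SimpleGraph V) (σ : Set V) : Prop :=
  σ.Nonempty ∧ G.IsClique σ ∧ ∃ S : Set (V × ℕ), σ = ⋂ p ∈ S, ball G p.1 p.2

/-- Every strictly increasing chain of round cliques σ₀ ⊊ σ₁ ⊊ ⋯ ⊊ σ_k has k ≤ N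
(combinatorial dimension at most N, following Corollary C of the paper). -/
def DimAtMost (G : SimpleGraph V) (N : ℕ) : Prop :=
  ∀ (k : ℕ) (c : Fin (k + 1) → Set V),
    (∀ i, IsRoundClique G (c i)) → StrictMono c → k ≤ N

/-- The injective hull of `G`, realized as the set of extremal functions. -/
def InjHull (G : SimpleGraph V) : Set (V → ℝ) :=
  {f | (∀ x y : V, (G.dist x y : ℝ) ≤ f x + f y) ∧
    ∀ x : V, IsLUB (Set.range fun y => (G.dist x y : ℝ) - f y) (f x)}

/-- The sup metric d∞ on the injective hull. -/
noncomputable def supDist (f g : V → ℝ) : ℝ := ⨆ x, |f x - g x|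

/-- The isometric action of a graph automorphism on the injective hull:
(g·f)(x) = f(g⁻¹·x). -/
def hullAct (g : Equiv.Perm V) (f : V → ℝ) : V → ℝ := fun x => f (g⁻¹ x)

/-- A permutation of the vertices is a graph automorphism if it preserves adjacency. -/
def IsGraphAut (G : SimpleGraph V) (g : Equiv.Perm V) : Prop :=
  ∀ x y, G.Adj (g x) (g y) ↔ G.Adj x y

/-- The round clique associated to a point of the injective hull:
φ(p) = ⋂_{x ∈ X} B(x, ⌈p(x)⌉). -/
def phi (G : SimpleGraph V) (p : V → ℝ) : Set V :=
  {z | ∀ x : V, (G.dist x z : ℝ) ≤ (⌈p x⌉ : ℝ)}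

/-- The values of `p` all lie in (1/2)ℕ. -/
def halfInt (p : V → ℝ) : Prop := ∀ x, ∃ k : ℕ, p x = (k : ℝ) / 2

end HellyPaper

/-!
A maximal clique `τ` of a connected graph is the intersection of the unit balls around its
vertices, so every nonempty intersection of maximal cliques is round. Conversely, let `σ` be a
round clique with at least two vertices and `z ∉ σ`. Some ball `B(x, r)` contains `σ` but not `z`,
and `r ≥ 1`. The balls `B(x, r - 1)` and `B(s, 1)`, `s ∈ σ`, pairwise intersect, so by the Helly
property some `w` lies in all of them. Then `σ ∪ {w}` is a clique, and `d(w, z) ≥ 2` by the triangle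
inequality through `x`, so a maximal clique containing `σ ∪ {w}` contains `σ` but not `z`.
-/

namespace HellyPaper

open SimpleGraph hiding ball mem_ball mem_ball_self ball_zero

section

variable {V : Type*} {G : SimpleGraph V}

lemma mem_ball {x y : V} {r : ℕ} : y ∈ ball G x r ↔ G.dist x y ≤ r := Iff.rfl

lemma mem_ball_self (x : V) (r : ℕ) : x ∈ ball G x r := by
  simp [mem_ball]

lemma ball_zero (hG : G.Connected) (x : V) : ball G x 0 = {x} := by
  ext y
  simp [mem_ball, hG.dist_eq_zero_iff, eq_comm]

lemma mem_ball_one_iff (hG : G.Connected) {x y : V} : y ∈ ball G x 1 ↔ x = y ∨ G.Adj x y := by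
  refine ⟨fun h => or_iff_not_imp_left.2 fun hne => ?_, ?_⟩
  · by_contra hnadj
    exact absurd h (not_le.2 (hG.one_lt_dist_of_ne_of_not_adj hne hnadj))
  · rintro (rfl | hadj)
    · exact mem_ball_self x 1
    · exact (dist_eq_one_iff_adj.2 hadj).le

lemma mem_ball_one_of_isClique {c : Set V} (hc : G.IsClique c) {x y : V} (hx : x ∈ c)
    (hy : y ∈ c) : y ∈ ball G x 1 := by
  obtain rfl | hne := eq_or_ne x y
  · exact mem_ball_self x 1
  · exact (dist_eq_one_iff_adj.2 (hc hx hy hne)).le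

lemma isClique_insert_of_forall_mem_ball (hG : G.Connected) {c : Set V} (hc : G.IsClique c)
    {w : V} (hw : ∀ v ∈ c, w ∈ ball G v 1) : G.IsClique (insert w c) :=
  hc.insert fun v hv hne => ((mem_ball_one_iff hG).1 (hw v hv)).resolve_left hne.symm |>.symm

lemma ball_inter_ball_one_nonempty (hG : G.Connected) {x s : V} {m : ℕ}
    (h : G.dist x s ≤ m + 1) : (ball G x m ∩ ball G s 1).Nonempty := by
  obtain hle | hlt := le_or_gt (G.dist x s) m
  · exact ⟨s, hle, mem_ball_self s 1⟩
  obtain ⟨p, hp⟩ := hG.exists_walk_length_eq_dist s x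
  cases p with
  | nil => simp at hlt
  | @cons _ y _ hadj q =>
    refine ⟨y, ?_, (dist_eq_one_iff_adj.2 hadj).le⟩
    have hq : G.dist y x ≤ q.length := dist_le q
    rw [Walk.length_cons, G.dist_comm] at hp
    rw [mem_ball, G.dist_comm]
    omega

lemma exists_maximal_isClique_superset {c : Set V} (hc : G.IsClique c) :
    ∃ τ, c ⊆ τ ∧ Maximal G.IsClique τ :=
  zorn_subset_nonempty {s | G.IsClique s}
    (fun ch hch hchain _ => ⟨⋃₀ ch, hchain.pairwise_sUnion.2 hch,
      fun _ => Set.subset_sUnion_of_mem⟩) c hc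

lemma eq_iInter_ball_one_of_maximal (hG : G.Connected) {τ : Set V}
    (hτ : Maximal G.IsClique τ) : τ = ⋂ v ∈ τ, ball G v 1 := by
  refine Set.Subset.antisymm
    (fun y hy => Set.mem_iInter₂.2 fun v hv => mem_ball_one_of_isClique hτ.1 hv hy) fun z hz => ?_
  have hclique : G.IsClique (insert z τ) :=
    isClique_insert_of_forall_mem_ball hG hτ.1 fun v hv => Set.mem_iInter₂.1 hz v hv
  exact hτ.2 hclique (Set.subset_insert z τ) (Set.mem_insert z τ)

lemma IsHellyGraph.exists_mem_ball_forall_mem_ball_one (hH : IsHellyGraph G) {σ : Set V}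
    (hσ : G.IsClique σ) {x : V} {m : ℕ} (hsub : σ ⊆ ball G x (m + 1)) :
    ∃ w ∈ ball G x m, ∀ s ∈ σ, w ∈ ball G s 1 := by
  let S : Set (V × ℕ) := insert (x, m) ((fun s => (s, 1)) '' σ)
  have hpair : ∀ p ∈ S, ∀ q ∈ S, (ball G p.1 p.2 ∩ ball G q.1 q.2).Nonempty := by
    rintro p (rfl | ⟨s, hs, rfl⟩) q (rfl | ⟨t, ht, rfl⟩)
    · exact ⟨x, mem_ball_self x m, mem_ball_self x m⟩
    · exact ball_inter_ball_one_nonempty hH.1 (hsub ht)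
    · exact Set.inter_comm _ _ ▸ ball_inter_ball_one_nonempty hH.1 (hsub hs)
    · exact ⟨t, mem_ball_one_of_isClique hσ hs ht, mem_ball_self t 1⟩
  obtain ⟨w, hw⟩ := hH.2 S hpair
  rw [Set.mem_iInter₂] at hw
  exact ⟨w, hw _ (Set.mem_insert _ _),
    fun s hs => hw (s, 1) (Set.mem_insert_of_mem _ ⟨s, hs, rfl⟩)⟩

lemma IsRoundClique.exists_maximal_isClique_not_mem (hH : IsHellyGraph G) {σ : Set V}
    (hσ : IsRoundClique G σ) (hnt : σ.Nontrivial) {z : V} (hz : z ∉ σ) :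
    ∃ τ, Maximal G.IsClique τ ∧ σ ⊆ τ ∧ z ∉ τ := by
  obtain ⟨-, hclique, S, rfl⟩ := hσ
  obtain ⟨⟨x, r⟩, hxS, hzx⟩ : ∃ p ∈ S, z ∉ ball G p.1 p.2 := by
    simpa only [Set.mem_iInter₂, not_forall, exists_prop] using hz
  have hsub : (⋂ p ∈ S, ball G p.1 p.2) ⊆ ball G x r := Set.biInter_subset_of_mem hxS
  have hr : r ≠ 0 := by
    rintro rfl
    exact hnt.not_subset_singleton (ball_zero hH.1 x ▸ hsub)
  obtain ⟨w, hwx, hwσ⟩ := hH.exists_mem_ball_forall_mem_ball_one hclique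
    (m := r - 1) (Nat.sub_add_cancel (Nat.one_le_iff_ne_zero.2 hr) ▸ hsub)
  have hzw : z ∉ ball G w 1 := by
    have := hH.1.dist_triangle (u := x) (v := w) (w := z)
    simp only [mem_ball] at hwx hzx ⊢
    omega
  obtain ⟨τ, hwστ, hτ⟩ :=
    exists_maximal_isClique_superset (isClique_insert_of_forall_mem_ball hH.1 hclique hwσ)
  exact ⟨τ, hτ, (Set.subset_insert _ _).trans hwστ,
    fun hzτ => hzw (mem_ball_one_of_isClique hτ.1 (hwστ (Set.mem_insert _ _)) hzτ)⟩

lemma IsRoundClique.eq_sInter_maximal_isClique (hH : IsHellyGraph G) {σ : Set V}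
    (hσ : IsRoundClique G σ) (hnt : σ.Nontrivial) :
    σ = ⋂₀ {τ | Maximal G.IsClique τ ∧ σ ⊆ τ} := by
  refine Set.Subset.antisymm (fun y hy => Set.mem_sInter.2 fun τ hτ => hτ.2 hy) fun z hz => ?_
  by_contra hzσ
  obtain ⟨τ, hτ, hστ, hzτ⟩ := hσ.exists_maximal_isClique_not_mem hH hnt hzσ
  exact hzτ (Set.mem_sInter.1 hz τ ⟨hτ, hστ⟩)

lemma isRoundClique_singleton (hG : G.Connected) (x : V) : IsRoundClique G {x} :=
  ⟨Set.singleton_nonempty x, Set.pairwise_singleton x G.Adj, {(x, 0)}, by simp [ball_zero hG]⟩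

lemma isRoundClique_sInter_maximal (hG : G.Connected) {M : Set (Set V)}
    (hne : (⋂₀ M).Nonempty) (hM : M.Nonempty) (hmax : ∀ τ ∈ M, Maximal G.IsClique τ) :
    IsRoundClique G (⋂₀ M) := by
  obtain ⟨τ₀, hτ₀⟩ := hM
  refine ⟨hne, (hmax τ₀ hτ₀).1.subset (Set.sInter_subset_of_mem hτ₀),
    {p | p.2 = 1 ∧ ∃ τ ∈ M, p.1 ∈ τ}, ?_⟩
  ext z
  simp only [Set.mem_sInter, Set.mem_iInter, Set.mem_ofPred_eq, and_imp, Prod.forall,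
    forall_eq, forall_exists_index]
  refine ⟨fun hz v τ hτ hv => mem_ball_one_of_isClique (hmax τ hτ).1 hv (hz τ hτ),
    fun hz τ hτ => ?_⟩
  rw [eq_iInter_ball_one_of_maximal hG (hmax τ hτ)]
  exact Set.mem_iInter₂.2 fun v hv => hz v τ hτ hv

end

/-- In a Helly graph, a subset is a round clique if and only if it is a
singleton or a nonempty intersection of a (nonempty) family of maximal
cliques. -/
theorem stmt6 {V : Type*} (G : SimpleGraph V) (hHelly : IsHellyGraph G)
    (σ : Set V) :
    IsRoundClique G σ ↔
      ((∃ x : V, σ = {x}) ∨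
        (σ.Nonempty ∧ ∃ M : Set (Set V), M.Nonempty ∧
          (∀ τ ∈ M, Maximal G.IsClique τ) ∧ σ = ⋂₀ M)) := by
  constructor
  · intro hσ
    refine hσ.1.exists_eq_singleton_or_nontrivial.imp_right fun hnt => ⟨hσ.1, _, ?_,
      fun τ hτ => hτ.1, hσ.eq_sInter_maximal_isClique hHelly hnt⟩
    obtain ⟨τ, hστ, hτ⟩ := exists_maximal_isClique_superset hσ.2.1
    exact ⟨τ, hτ, hστ⟩
  · rintro (⟨x, rfl⟩ | ⟨hne, M, hM, hmax, rfl⟩)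
    · exact isRoundClique_singleton hHelly.1 x
    · exact isRoundClique_sInter_maximal hHelly.1 hne hM hmax

end HellyPaper
end

section
/- Let X be a Helly graph such that every strictly increasing chain of round cliques of X has length at most N (with N ≥ 1), and let g be a graph automorphism of X that is not elliptic (i.e. some, equivalently every, orbit of ⟨g⟩ in X is unbounded). Then for every vertex x of X and every n ∈ ℕ, d(x, g^n · x) ≥ n/(2N); in particular g has infinite order (g^n is not the identity automorphism for any n ≥ 1). -/
/-!
Suppose `d(x, gⁿx) < n / (2N)`. Averaging the distance functions `d(gⁱx, ·)`, `i < n`, gives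
a metric form displaced by at most `L = d(x, gⁿx) / n < 1 / (N + 1)` under `g`. Iterating
`p ↦ (p + p*) / 2`, where `p* y = sup_x (d(x, y) - p x)` (`dualForm`), turns it into a point `ρ`
of the injective hull with the same displacement bound. For `m ≤ N + 1` the sets
`⋂_{j ≤ m} gʲ φ(ρ)` are then round cliques: they are nonempty by the Helly property, because
the balls `B(gʲx, ⌈ρ x⌉)` pairwise meet. This descending chain of length `N + 1` must stall by
the dimension bound, and a stalled intersection is `g⁻¹`-invariant, so `g` would have a
bounded orbit.
-/

namespace HellyPaper

open Filter Topology

variable {V : Type*} {G : SimpleGraph V}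

lemma cast_dist_triangle (hc : G.Connected) (x y z : V) :
    (G.dist x z : ℝ) ≤ G.dist x y + G.dist y z := by
  exact_mod_cast hc.dist_triangle

section Automorphisms

def autSubgroup (G : SimpleGraph V) : Subgroup (Equiv.Perm V) where
  carrier := {g | IsGraphAut G g}
  one_mem' _ _ := Iff.rfl
  mul_mem' hg hh x y := (hg _ _).trans (hh x y)
  inv_mem' {g} hg x y := by simpa using (hg (g⁻¹ x) (g⁻¹ y)).symm

variable {g : Equiv.Perm V}

lemma IsGraphAut.inv (hg : IsGraphAut G g) : IsGraphAut G g⁻¹ :=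
  (autSubgroup G).inv_mem hg

lemma IsGraphAut.pow (hg : IsGraphAut G g) (n : ℕ) : IsGraphAut G (g ^ n) :=
  (autSubgroup G).pow_mem hg n

lemma IsGraphAut.dist_apply_le (hc : G.Connected) (hg : IsGraphAut G g) (x y : V) :
    G.dist (g x) (g y) ≤ G.dist x y := by
  obtain ⟨w, hw⟩ := hc.exists_walk_length_eq_dist x y
  simpa [hw] using SimpleGraph.dist_le (w.map ⟨g, (hg _ _).mpr⟩)

lemma IsGraphAut.dist_apply (hc : G.Connected) (hg : IsGraphAut G g) (x y : V) :
    G.dist (g x) (g y) = G.dist x y :=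
  (hg.dist_apply_le hc x y).antisymm (by simpa using hg.inv.dist_apply_le hc (g x) (g y))

lemma IsGraphAut.dist_inv_apply (hc : G.Connected) (hg : IsGraphAut G g) (x y : V) :
    G.dist x (g⁻¹ y) = G.dist (g x) y := by
  simpa using (hg.dist_apply hc x (g⁻¹ y)).symm

lemma IsGraphAut.exists_orbit_bound (hc : G.Connected) (hg : IsGraphAut G g) {v z : V} {R : ℝ}
    (h : ∀ j : ℕ, (G.dist v ((g ^ j)⁻¹ z) : ℝ) ≤ R) :
    ∃ (x : V) (R : ℝ), ∀ n : ℤ, (G.dist x ((g ^ n) x) : ℝ) ≤ R := by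
  have h0 : (G.dist v z : ℝ) ≤ R := by simpa using h 0
  have hback (k : ℕ) : (G.dist z ((g ^ k)⁻¹ z) : ℝ) ≤ 2 * R := by
    have := cast_dist_triangle hc z v ((g ^ k)⁻¹ z)
    rw [SimpleGraph.dist_comm (u := z) (v := v)] at this
    linarith [h k]
  refine ⟨z, 2 * R, fun n => ?_⟩
  obtain ⟨k, rfl | rfl⟩ := Int.eq_nat_or_neg n
  · rw [zpow_natCast, SimpleGraph.dist_comm, ← (hg.pow k).dist_inv_apply hc]
    exact hback k
  · rw [zpow_neg, zpow_natCast]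
    exact hback k

end Automorphisms

lemma ball_inter_nonempty (hc : G.Connected) {a b : V} {r s : ℕ} (h : G.dist a b ≤ r + s) :
    (ball G a r ∩ ball G b s).Nonempty := by
  obtain ⟨w, hw⟩ := hc.exists_walk_length_eq_dist a b
  refine ⟨w.getVert r, (SimpleGraph.dist_le (w.take r)).trans ?_, ?_⟩
  · simp
  · show G.dist b _ ≤ s
    rw [SimpleGraph.dist_comm]
    refine (SimpleGraph.dist_le (w.drop r)).trans ?_
    simp only [SimpleGraph.Walk.drop_length]
    omega

section MetricForms

def IsMetricForm (G : SimpleGraph V) (p : V → ℝ) : Prop :=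
  ∀ x y, (G.dist x y : ℝ) ≤ p x + p y

noncomputable def dualForm (G : SimpleGraph V) (p : V → ℝ) : V → ℝ :=
  fun y => ⨆ x, ((G.dist x y : ℝ) - p x)

def BoundedDrift (g : Equiv.Perm V) (L : ℝ) (p : V → ℝ) : Prop :=
  ∀ y, |hullAct g p y - p y| ≤ L

variable {p q : V → ℝ}

namespace IsMetricForm

lemma nonneg (hp : IsMetricForm G p) (y : V) : 0 ≤ p y := by
  have := hp y y
  simp only [SimpleGraph.dist_self, Nat.cast_zero] at this
  linarith

lemma bddAbove (hp : IsMetricForm G p) (y : V) :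
    BddAbove (Set.range fun x => (G.dist x y : ℝ) - p x) :=
  ⟨p y, by rintro _ ⟨x, rfl⟩; linarith [hp x y]⟩

lemma sub_le_dualForm (hp : IsMetricForm G p) (x y : V) :
    (G.dist x y : ℝ) - p x ≤ dualForm G p y :=
  le_ciSup (hp.bddAbove y) x

lemma dualForm_le (hp : IsMetricForm G p) (y : V) : dualForm G p y ≤ p y :=
  have : Nonempty V := ⟨y⟩
  ciSup_le fun x => by linarith [hp x y]

lemma dualForm_anti (hp : IsMetricForm G p) (hpq : ∀ y, p y ≤ q y) (y : V) :
    dualForm G q y ≤ dualForm G p y :=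
  ciSup_mono (hp.bddAbove y) fun x => by linarith [hpq x]

lemma dualForm_le_add (hq : IsMetricForm G q) {c : ℝ} (hpq : ∀ y, q y ≤ p y + c) (y : V) :
    dualForm G p y ≤ dualForm G q y + c :=
  have : Nonempty V := ⟨y⟩
  ciSup_le fun x => by linarith [hq.sub_le_dualForm x y, hpq x]

lemma abs_dualForm_sub_le (hp : IsMetricForm G p) (hq : IsMetricForm G q) {c : ℝ}
    (hpq : ∀ y, |p y - q y| ≤ c) (y : V) : |dualForm G p y - dualForm G q y| ≤ c := by
  rw [abs_sub_le_iff]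
  constructor
  · linarith [hq.dualForm_le_add (p := p) (fun y => by linarith [(abs_sub_le_iff.mp (hpq y)).2]) y]
  · linarith [hp.dualForm_le_add (p := q) (fun y => by linarith [(abs_sub_le_iff.mp (hpq y)).1]) y]

end IsMetricForm

lemma isMetricForm_hullAct (hc : G.Connected) {g : Equiv.Perm V} (hg : IsGraphAut G g)
    (hp : IsMetricForm G p) : IsMetricForm G (hullAct g p) := fun x y => by
  rw [← hg.inv.dist_apply hc]
  exact hp _ _

lemma dualForm_hullAct (hc : G.Connected) {g : Equiv.Perm V} (hg : IsGraphAut G g) (p : V → ℝ) :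
    dualForm G (hullAct g p) = hullAct g (dualForm G p) := by
  ext y
  simp only [dualForm, hullAct]
  rw [← Equiv.iSup_comp (g := fun x => (G.dist x y : ℝ) - p (g⁻¹ x)) g]
  congr 1 with x
  rw [← hg.dist_inv_apply hc]
  simp

end MetricForms

section ExtremalForms

variable {p : V → ℝ} {g : Equiv.Perm V} {L : ℝ}

noncomputable def dualMean (G : SimpleGraph V) (p : V → ℝ) : V → ℝ :=
  fun y => (p y + dualForm G p y) / 2

lemma isMetricForm_dualMean (hp : IsMetricForm G p) : IsMetricForm G (dualMean G p) :=
  fun x y => by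
    have hx := hp.sub_le_dualForm x y
    have hy := hp.sub_le_dualForm y x
    rw [SimpleGraph.dist_comm] at hy
    simp only [HellyPaper.dualMean]
    linarith

lemma IsMetricForm.dualMean_le (hp : IsMetricForm G p) (y : V) : dualMean G p y ≤ p y := by
  simp only [HellyPaper.dualMean]
  linarith [hp.dualForm_le y]

lemma IsMetricForm.boundedDrift_dualMean (hc : G.Connected) (hg : IsGraphAut G g)
    (hp : IsMetricForm G p) (hd : BoundedDrift g L p) : BoundedDrift g L (dualMean G p) :=
  fun y => by
    have hdual : |hullAct g (dualForm G p) y - dualForm G p y| ≤ L := by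
      rw [← dualForm_hullAct hc hg]
      exact (isMetricForm_hullAct hc hg hp).abs_dualForm_sub_le hp hd y
    have hy := hd y
    simp only [HellyPaper.dualMean, hullAct] at hdual hy ⊢
    rw [abs_le] at hdual hy ⊢
    constructor <;> linarith

lemma IsMetricForm.mem_injHull (hp : IsMetricForm G p) (h : ∀ y, p y ≤ dualForm G p y) :
    p ∈ InjHull G := by
  refine ⟨hp, fun x => ⟨?_, fun b hb => (h x).trans ?_⟩⟩
  · rintro _ ⟨y, rfl⟩
    linarith [hp x y]
  · have : Nonempty V := ⟨x⟩
    exact ciSup_le fun y => by rw [SimpleGraph.dist_comm]; exact hb ⟨y, rfl⟩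

theorem exists_mem_injHull_boundedDrift (hc : G.Connected) (hg : IsGraphAut G g)
    (hp : IsMetricForm G p) (hd : BoundedDrift g L p) :
    ∃ ρ ∈ InjHull G, BoundedDrift g L ρ := by
  set r : ℕ → V → ℝ := fun k => (dualMean G)^[k] p
  have hr_succ (k : ℕ) : r (k + 1) = dualMean G (r k) := Function.iterate_succ_apply' _ _ _
  -- `dualForm` commutes with `hullAct g` and is non-expansive: every iterate keeps the drift bound.
  have hr (k : ℕ) : IsMetricForm G (r k) ∧ BoundedDrift g L (r k) := by
    induction k with
    | zero => exact ⟨hp, hd⟩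
    | succ k ih =>
      rw [hr_succ]
      exact ⟨isMetricForm_dualMean ih.1, ih.1.boundedDrift_dualMean hc hg ih.2⟩
  have hbdd (y : V) : BddBelow (Set.range fun k => r k y) :=
    ⟨0, by rintro _ ⟨k, rfl⟩; exact (hr k).1.nonneg y⟩
  have hanti (y : V) : Antitone fun k => r k y :=
    antitone_nat_of_succ_le fun k => by rw [hr_succ]; exact (hr k).1.dualMean_le y
  set ρ : V → ℝ := fun y => ⨅ k, r k y
  have hlim (y : V) : Tendsto (fun k => r k y) atTop (𝓝 (ρ y)) :=
    tendsto_atTop_ciInf (hanti y) (hbdd y)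
  have hρ : IsMetricForm G ρ := fun x y =>
    ge_of_tendsto' ((hlim x).add (hlim y)) fun k => (hr k).1 x y
  refine ⟨ρ, hρ.mem_injHull fun y => ?_, fun y => ?_⟩
  · -- `r (k + 1) ≤ (r k + ρ*) / 2` as `dualForm` is antitone; in the limit `ρ ≤ (ρ + ρ*) / 2`.
    have hstep (k : ℕ) : 2 * r (k + 1) y - r k y ≤ dualForm G ρ y := by
      rw [hr_succ]
      simp only [dualMean]
      linarith [hρ.dualForm_anti (fun x => ciInf_le (hbdd x) k) y]
    have hlim' := (((hlim y).comp (tendsto_add_atTop_nat 1)).const_mul 2).sub (hlim y)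
    linarith [le_of_tendsto' hlim' hstep]
  · exact le_of_tendsto' ((hlim (g⁻¹ y)).sub (hlim y)).abs fun k => (hr k).2 y

end ExtremalForms

lemma BoundedDrift.abs_pow_apply_sub_le {g : Equiv.Perm V} {L : ℝ} {p : V → ℝ}
    (hd : BoundedDrift g L p) (k : ℕ) (y : V) : |p ((g ^ k) y) - p y| ≤ k * L := by
  induction k generalizing y with
  | zero => simp
  | succ k ih =>
    have hstep : |p (g y) - p y| ≤ L := by simpa [hullAct, abs_sub_comm] using hd (g y)
    rw [pow_succ, Equiv.Perm.mul_apply]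
    calc |p ((g ^ k) (g y)) - p y|
        ≤ |p ((g ^ k) (g y)) - p (g y)| + |p (g y) - p y| := abs_sub_le _ _ _
      _ ≤ k * L + L := add_le_add (ih (g y)) hstep
      _ = (k + 1 : ℕ) * L := by push_cast; ring

section RoundCliques

variable {g : Equiv.Perm V} {ρ : V → ℝ} {m : ℕ}

lemma le_one_of_mem_phi (hρ : ρ ∈ InjHull G) {z : V} (hz : z ∈ phi G ρ) : ρ z ≤ 1 :=
  (hρ.2 z).2 <| by
    rintro _ ⟨y, rfl⟩
    have hy := hz y
    rw [SimpleGraph.dist_comm] at hy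
    linarith [Int.ceil_lt_add_one (ρ y)]

lemma isClique_phi (hc : G.Connected) (hρ : ρ ∈ InjHull G) : G.IsClique (phi G ρ) := by
  intro z hz z' hz' hne
  have hceil : ⌈ρ z⌉ ≤ 1 := Int.ceil_le.mpr (by exact_mod_cast le_one_of_mem_phi hρ hz)
  have hle : (G.dist z z' : ℝ) ≤ 1 := (hz' z).trans (by exact_mod_cast hceil)
  replace hle : G.dist z z' ≤ 1 := by exact_mod_cast hle
  have hpos := hc.pos_dist_of_ne hne
  exact SimpleGraph.dist_eq_one_iff_adj.mp (by omega)

def phiTranslates (G : SimpleGraph V) (g : Equiv.Perm V) (ρ : V → ℝ) (m : ℕ) : Set V :=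
  {z | ∀ j ≤ m, (g ^ j)⁻¹ z ∈ phi G ρ}

def phiTranslateBalls (g : Equiv.Perm V) (ρ : V → ℝ) (m : ℕ) : Set (V × ℕ) :=
  (fun jx : ℕ × V => ((g ^ jx.1) jx.2, ⌈ρ jx.2⌉₊)) '' {jx | jx.1 ≤ m}

lemma phiTranslates_subset_phi : phiTranslates G g ρ m ⊆ phi G ρ := fun z hz => by
  simpa using hz 0 (Nat.zero_le m)

lemma phiTranslates_succ_subset : phiTranslates G g ρ (m + 1) ⊆ phiTranslates G g ρ m :=
  fun _ hz j hj => hz j (by omega)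

lemma inv_apply_mem_phiTranslates {z : V} (hz : z ∈ phiTranslates G g ρ (m + 1)) :
    g⁻¹ z ∈ phiTranslates G g ρ m := fun j hj => by
  simpa [pow_succ', mul_inv_rev] using hz (j + 1) (by omega)

lemma mem_ball_pow_iff (hc : G.Connected) (hg : IsGraphAut G g) (hρ : IsMetricForm G ρ)
    (j : ℕ) (x z : V) :
    z ∈ ball G ((g ^ j) x) ⌈ρ x⌉₊ ↔ (G.dist x ((g ^ j)⁻¹ z) : ℝ) ≤ ⌈ρ x⌉ := by
  rw [ball, Set.mem_ofPred_eq, (hg.pow j).dist_inv_apply hc,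
    ← natCast_ceil_eq_intCast_ceil (hρ.nonneg x), Nat.cast_le]

lemma phiTranslates_eq_iInter (hc : G.Connected) (hg : IsGraphAut G g) (hρ : IsMetricForm G ρ)
    (m : ℕ) : phiTranslates G g ρ m = ⋂ q ∈ phiTranslateBalls g ρ m, ball G q.1 q.2 := by
  ext z
  simp only [phiTranslates, phiTranslateBalls, phi, Set.mem_ofPred_eq, Set.mem_iInter,
    Set.mem_image, Prod.exists, forall_exists_index, and_imp]
  constructor
  · rintro hz _ j x hj rfl
    exact (mem_ball_pow_iff hc hg hρ j x z).mpr (hz j hj x)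
  · exact fun hz j hj x => (mem_ball_pow_iff hc hg hρ j x z).mp (hz _ j x hj rfl)

lemma dist_pow_apply_le_ceil_add_ceil (hc : G.Connected) (hg : IsGraphAut G g)
    (hρ : IsMetricForm G ρ) {i j : ℕ} (hji : j ≤ i)
    (hdrift : ∀ y, ρ ((g ^ (i - j)) y) < ρ y + 1) (x y : V) :
    G.dist ((g ^ j) x) ((g ^ i) y) ≤ ⌈ρ x⌉₊ + ⌈ρ y⌉₊ := by
  have hsplit : (g ^ i) y = (g ^ j) ((g ^ (i - j)) y) := by
    rw [← Equiv.Perm.mul_apply, ← pow_add, Nat.add_sub_cancel' hji]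
  rw [hsplit, (hg.pow j).dist_apply hc]
  have hlt : (G.dist x ((g ^ (i - j)) y) : ℝ) < ⌈ρ x⌉₊ + ⌈ρ y⌉₊ + 1 := by
    linarith [hρ x ((g ^ (i - j)) y), hdrift y, Nat.le_ceil (ρ x), Nat.le_ceil (ρ y)]
  exact Nat.lt_succ_iff.mp (by exact_mod_cast hlt)

lemma phiTranslates_nonempty (hHelly : IsHellyGraph G) (hg : IsGraphAut G g)
    (hρ : IsMetricForm G ρ) (hdrift : ∀ k ≤ m, ∀ y, ρ ((g ^ k) y) < ρ y + 1) :
    (phiTranslates G g ρ m).Nonempty := by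
  rw [phiTranslates_eq_iInter hHelly.1 hg hρ]
  refine hHelly.2 _ ?_
  rintro _ ⟨⟨j, x⟩, hj, rfl⟩ _ ⟨⟨i, y⟩, hi, rfl⟩
  rcases le_total j i with hji | hij
  · exact ball_inter_nonempty hHelly.1 <|
      dist_pow_apply_le_ceil_add_ceil hHelly.1 hg hρ hji (hdrift _ (by simp at hi; omega)) x y
  · rw [Set.inter_comm]
    exact ball_inter_nonempty hHelly.1 <|
      dist_pow_apply_le_ceil_add_ceil hHelly.1 hg hρ hij (hdrift _ (by simp at hj; omega)) y x

lemma isRoundClique_phiTranslates (hHelly : IsHellyGraph G) (hg : IsGraphAut G g)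
    (hρ : ρ ∈ InjHull G) (hdrift : ∀ k ≤ m, ∀ y, ρ ((g ^ k) y) < ρ y + 1) :
    IsRoundClique G (phiTranslates G g ρ m) :=
  ⟨phiTranslates_nonempty hHelly hg hρ.1 hdrift,
    (isClique_phi hHelly.1 hρ).subset phiTranslates_subset_phi,
    _, phiTranslates_eq_iInter hHelly.1 hg hρ.1 m⟩

lemma exists_orbit_bound_of_phiTranslates_succ_eq (hc : G.Connected) (hg : IsGraphAut G g)
    (heq : phiTranslates G g ρ (m + 1) = phiTranslates G g ρ m)
    (hne : (phiTranslates G g ρ m).Nonempty) :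
    ∃ (x : V) (R : ℝ), ∀ n : ℤ, (G.dist x ((g ^ n) x) : ℝ) ≤ R := by
  obtain ⟨z, hz⟩ := hne
  have hmem (j : ℕ) : (g ^ j)⁻¹ z ∈ phiTranslates G g ρ m := by
    induction j with
    | zero => simpa using hz
    | succ j ih =>
      rw [← heq] at ih
      simpa [pow_succ, mul_inv_rev] using inv_apply_mem_phiTranslates ih
  exact hg.exists_orbit_bound hc fun j => phiTranslates_subset_phi (hmem j) z

end RoundCliques

lemma exists_succ_eq_of_dimAtMost {N : ℕ} (hdim : DimAtMost G N) {A : ℕ → Set V}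
    (hA : ∀ m ≤ N + 1, IsRoundClique G (A m)) (hanti : ∀ m, A (m + 1) ⊆ A m) :
    ∃ m ≤ N, A (m + 1) = A m := by
  by_contra! hne
  have hchain : StrictMono fun i : Fin (N + 2) => A (N + 1 - i) := by
    refine Fin.strictMono_iff_lt_succ.mpr fun i => ?_
    have hi : N + 1 - (i : ℕ) = N - i + 1 := by omega
    simp only [Fin.val_castSucc, Fin.val_succ, hi, Nat.add_sub_add_right]
    exact (hanti _).ssubset_of_ne (hne _ (by omega))
  have := hdim (N + 1) _ (fun i => hA _ (by omega)) hchain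
  omega

section OrbitAverage

variable {g : Equiv.Perm V} {x : V} {n : ℕ}

noncomputable def orbitAverage (G : SimpleGraph V) (g : Equiv.Perm V) (x : V) (n : ℕ) :
    V → ℝ :=
  fun y => (∑ i ∈ Finset.range n, (G.dist ((g ^ i) x) y : ℝ)) / n

lemma isMetricForm_orbitAverage (hc : G.Connected) (hn : 0 < n) :
    IsMetricForm G (orbitAverage G g x n) := fun y z => by
  have hterm (i : ℕ) : (G.dist y z : ℝ) ≤ G.dist ((g ^ i) x) y + G.dist ((g ^ i) x) z := by
    rw [SimpleGraph.dist_comm (u := (g ^ i) x)]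
    exact cast_dist_triangle hc y _ z
  rw [orbitAverage, orbitAverage, ← add_div, ← Finset.sum_add_distrib,
    le_div_iff₀ (by exact_mod_cast hn)]
  calc (G.dist y z : ℝ) * n = ∑ _i ∈ Finset.range n, (G.dist y z : ℝ) := by simp [mul_comm]
    _ ≤ _ := Finset.sum_le_sum fun i _ => hterm i

lemma boundedDrift_orbitAverage (hc : G.Connected) (hg : IsGraphAut G g) (hn : 0 < n) :
    BoundedDrift g (G.dist x ((g ^ n) x) / n) (orbitAverage G g x n) := fun y => by
  have hshift (i : ℕ) : G.dist ((g ^ i) x) (g⁻¹ y) = G.dist ((g ^ (i + 1)) x) y := by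
    rw [hg.dist_inv_apply hc, pow_succ', Equiv.Perm.mul_apply]
  have htelescope : hullAct g (orbitAverage G g x n) y - orbitAverage G g x n y
      = ((G.dist ((g ^ n) x) y : ℝ) - G.dist x y) / n := by
    simp only [hullAct, orbitAverage, hshift, ← sub_div, ← Finset.sum_sub_distrib,
      Finset.sum_range_sub fun i => (G.dist ((g ^ i) x) y : ℝ)]
    simp
  rw [htelescope, abs_div, Nat.abs_cast,
    div_le_div_iff_of_pos_right (by exact_mod_cast hn), abs_sub_le_iff]
  constructor
  · have := cast_dist_triangle hc ((g ^ n) x) x y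
    rw [SimpleGraph.dist_comm (u := (g ^ n) x) (v := x)] at this
    linarith
  · linarith [cast_dist_triangle hc x ((g ^ n) x) y]

end OrbitAverage

theorem exists_orbit_bound_of_mem_injHull {N : ℕ} {g : Equiv.Perm V} {ρ : V → ℝ} {L : ℝ}
    (hHelly : IsHellyGraph G) (hdim : DimAtMost G N) (hg : IsGraphAut G g)
    (hρ : ρ ∈ InjHull G) (hd : BoundedDrift g L ρ) (hL : (N + 1) * L < 1) :
    ∃ (x : V) (R : ℝ), ∀ n : ℤ, (G.dist x ((g ^ n) x) : ℝ) ≤ R := by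
  obtain ⟨v⟩ := hHelly.1.nonempty
  have hL0 : 0 ≤ L := (abs_nonneg _).trans (hd v)
  have hdrift (k : ℕ) (hk : k ≤ N + 1) (y : V) : ρ ((g ^ k) y) < ρ y + 1 := by
    have hkL : (k : ℝ) * L ≤ (N + 1) * L := by
      gcongr
      exact_mod_cast hk
    linarith [(abs_le.mp (hd.abs_pow_apply_sub_le k y)).2]
  obtain ⟨m, hm, heq⟩ := exists_succ_eq_of_dimAtMost hdim
    (fun m hm => isRoundClique_phiTranslates hHelly hg hρ fun k hk => hdrift k (hk.trans hm))
    (fun _ => phiTranslates_succ_subset)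
  exact exists_orbit_bound_of_phiTranslates_succ_eq hHelly.1 hg heq
    (phiTranslates_nonempty hHelly hg hρ.1 fun k hk => hdrift k (by omega))

theorem div_le_dist_pow_apply {N : ℕ} (hN : 1 ≤ N) {g : Equiv.Perm V}
    (hHelly : IsHellyGraph G) (hdim : DimAtMost G N) (hg : IsGraphAut G g)
    (hnotell : ¬ ∃ (x : V) (R : ℝ), ∀ n : ℤ, (G.dist x ((g ^ n) x) : ℝ) ≤ R)
    (x : V) (n : ℕ) : (n : ℝ) / (2 * N) ≤ G.dist x ((g ^ n) x) := by
  by_contra! hlt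
  have hn : 0 < n := Nat.pos_of_ne_zero (by rintro rfl; simp at hlt)
  have hNR : (1 : ℝ) ≤ N := by exact_mod_cast hN
  have hD : (G.dist x ((g ^ n) x) : ℝ) * (2 * N) < n := (lt_div_iff₀ (by positivity)).mp hlt
  have hL : (N + 1) * ((G.dist x ((g ^ n) x) : ℝ) / n) < 1 := by
    rw [mul_div_assoc', div_lt_one (by exact_mod_cast hn)]
    nlinarith [(G.dist x ((g ^ n) x)).cast_nonneg (α := ℝ)]
  obtain ⟨ρ, hρ, hdρ⟩ := exists_mem_injHull_boundedDrift hHelly.1 hg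
    (isMetricForm_orbitAverage hHelly.1 hn) (boundedDrift_orbitAverage hHelly.1 hg hn)
  exact hnotell (exists_orbit_bound_of_mem_injHull hHelly hdim hg hρ hdρ hL)

end HellyPaper

namespace HellyPaper

/-- A non-elliptic automorphism of a Helly graph of combinatorial dimension at
most N ≥ 1 satisfies d(x, gⁿ·x) ≥ n/(2N) for every vertex x; in particular it
has infinite order. -/
theorem stmt13 {V : Type*} (G : SimpleGraph V) (N : ℕ) (hN : 1 ≤ N)
    (hHelly : IsHellyGraph G) (hdim : DimAtMost G N)
    (g : Equiv.Perm V) (hg : IsGraphAut G g)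
    (hnotell : ¬ ∃ (x : V) (R : ℝ), ∀ n : ℤ, (G.dist x ((g ^ n) x) : ℝ) ≤ R) :
    (∀ (x : V) (n : ℕ), (n : ℝ) / (2 * N) ≤ (G.dist x ((g ^ n) x) : ℝ)) ∧
      ∀ n : ℕ, 1 ≤ n → g ^ n ≠ 1 := by
  have hbound := div_le_dist_pow_apply hN hHelly hdim hg hnotell
  refine ⟨hbound, fun n hn hgn => ?_⟩
  obtain ⟨x⟩ := hHelly.1.nonempty
  have hx : (n : ℝ) / (2 * N) ≤ 0 := by simpa [hgn] using hbound x n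
  have hNR : (0 : ℝ) < N := by exact_mod_cast hN
  exact hx.not_gt (div_pos (by exact_mod_cast hn) (by positivity))
end HellyPaper
end
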